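/- Let D u = Σ_{j=0}^n λ_j(x) e_j ∂_j u be a generalized Cauchy–Riemann operator on Ω ⊆ ℝ^{n+1} with real-valued C¹ coefficients λ_j, λ_0 ≠ 0, β_i := λ_i/λ_0, and let F u = Σ_{i=0}^n A^{(i)}(x) ∂_i u where each A^{(i)} is a real-valued C¹ function. If for every i = 1, …, n the condition D A^{(i)}(x) − D A^{(0)}(x) β_i(x) e_i − Σ_{j=0}^n A^{(j)}(x) λ_0(x) ∂_j β_i(x) e_i = 0 holds on Ω, then for every C² function u : Ω → A_n(2, α_j, γ_ij) with Du = 0 one has D(F u) = 0; that is, (F, D) is an associated pair. -/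

import Mathlib

open scoped BigOperators

/-!
Differentiating `Du = 0` and using the symmetry of second derivatives gives the commutator formula
`D(Fu) = F(Du) + Σᵢ Mᵢ ∂ᵢu` with `Mᵢ = DA⁽ⁱ⁾ - (Σⱼ A⁽ʲ⁾ ∂ⱼλᵢ) eᵢ`. By the quotient rule for
`∂ⱼβᵢ`, the hypothesis says exactly `Mᵢ = βᵢ M₀ eᵢ` for `i ≠ 0`, and this also holds for `i = 0`
because `e₀ = 1`. Hence `Σᵢ Mᵢ ∂ᵢu = λ₀⁻¹ M₀ Du = 0`.
-/

/-- Partial derivative in the `k`-th coordinate direction. -/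
noncomputable def pd {m : ℕ} {F : Type*} [NormedAddCommGroup F] [NormedSpace ℝ F]
    (k : Fin m) (u : (Fin m → ℝ) → F) (x : Fin m → ℝ) : F :=
  fderiv ℝ u x (Pi.single k 1)

/-- The generalized Cauchy–Riemann operator `Du = Σⱼ λⱼ(x) eⱼ ∂ⱼu` (with `e₀ = 1`). -/
noncomputable def Dop {n : ℕ} {A : Type*} [NormedRing A] [NormedAlgebra ℝ A]
    (lam : Fin (n + 1) → (Fin (n + 1) → ℝ) → ℝ) (e : Fin (n + 1) → A)
    (u : (Fin (n + 1) → ℝ) → A) (x : Fin (n + 1) → ℝ) : A :=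
  ∑ j, lam j x • (e j * pd j u x)

/-- `D` applied to a real-valued function `a`: the algebra-valued function
`Σⱼ λⱼ(x) ∂ⱼa(x) eⱼ`. -/
noncomputable def DopR {n : ℕ} {A : Type*} [NormedRing A] [NormedAlgebra ℝ A]
    (lam : Fin (n + 1) → (Fin (n + 1) → ℝ) → ℝ) (e : Fin (n + 1) → A)
    (a : (Fin (n + 1) → ℝ) → ℝ) (x : Fin (n + 1) → ℝ) : A :=
  ∑ j, (lam j x * pd j a x) • e j

section PartialDerivatives

variable {m : ℕ} {F : Type*} [NormedAddCommGroup F] [NormedSpace ℝ F] {x : Fin m → ℝ}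

lemma pd_congr_of_eventuallyEq {u v : (Fin m → ℝ) → F} (h : u =ᶠ[nhds x] v) (k : Fin m) :
    pd k u x = pd k v x := by
  unfold pd; rw [h.fderiv_eq]

lemma pd_eq_zero_of_eventuallyEq_zero {u : (Fin m → ℝ) → F} (h : u =ᶠ[nhds x] 0) (k : Fin m) :
    pd k u x = 0 := by
  rw [pd_congr_of_eventuallyEq h k]; simp [pd]

lemma pd_sum {ι : Type*} (s : Finset ι) {f : ι → (Fin m → ℝ) → F}
    (h : ∀ i ∈ s, DifferentiableAt ℝ (f i) x) (k : Fin m) :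
    pd k (fun y => ∑ i ∈ s, f i y) x = ∑ i ∈ s, pd k (f i) x := by
  unfold pd; rw [fderiv_fun_sum h]; simp

lemma pd_smul {c : (Fin m → ℝ) → ℝ} {f : (Fin m → ℝ) → F}
    (hc : DifferentiableAt ℝ c x) (hf : DifferentiableAt ℝ f x) (k : Fin m) :
    pd k (fun y => c y • f y) x = c x • pd k f x + pd k c x • f x := by
  unfold pd; rw [fderiv_fun_smul hc hf]; simp

lemma pd_const_mul {A : Type*} [NormedRing A] [NormedAlgebra ℝ A] {f : (Fin m → ℝ) → A}
    (hf : DifferentiableAt ℝ f x) (b : A) (k : Fin m) :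
    pd k (fun y => b * f y) x = b * pd k f x := by
  unfold pd; rw [fderiv_const_mul hf b]; simp

lemma pd_mul {c d : (Fin m → ℝ) → ℝ} (hc : DifferentiableAt ℝ c x) (hd : DifferentiableAt ℝ d x)
    (k : Fin m) : pd k (fun y => c y * d y) x = c x * pd k d x + pd k c x * d x := by
  unfold pd; rw [fderiv_fun_mul hc hd]; simp [mul_comm]

lemma mul_pd_div {f g : (Fin m → ℝ) → ℝ} (hf : DifferentiableAt ℝ f x)
    (hg : DifferentiableAt ℝ g x) (hx : g x ≠ 0) (k : Fin m) :
    g x * pd k (fun y => f y / g y) x = pd k f x - f x / g x * pd k g x := by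
  have hfg : DifferentiableAt ℝ (fun y => f y / g y) x := by
    simp only [div_eq_mul_inv]; exact hf.mul (hg.inv hx)
  have hf_eq : f =ᶠ[nhds x] fun y => f y / g y * g y := by
    filter_upwards [hg.continuousAt.eventually_ne hx] with y hy
    rw [div_mul_cancel₀ _ hy]
  have h := pd_congr_of_eventuallyEq hf_eq k
  rw [pd_mul hfg hg k] at h
  rw [h]; ring

lemma differentiableAt_pd {u : (Fin m → ℝ) → F} (hu : ContDiffAt ℝ 2 u x) (j : Fin m) :
    DifferentiableAt ℝ (pd j u) x :=
  ((hu.fderiv_right (m := 1) le_rfl).differentiableAt one_ne_zero).clm_apply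
    (differentiableAt_const _)

lemma pd_pd_comm {u : (Fin m → ℝ) → F} (hu : ContDiffAt ℝ 2 u x) (i j : Fin m) :
    pd i (pd j u) x = pd j (pd i u) x := by
  have hD : DifferentiableAt ℝ (fderiv ℝ u) x :=
    (hu.fderiv_right (m := 1) le_rfl).differentiableAt one_ne_zero
  have hpd : ∀ i j : Fin m,
      pd i (pd j u) x = fderiv ℝ (fderiv ℝ u) x (Pi.single i 1) (Pi.single j 1) := by
    intro i j
    unfold pd
    rw [fderiv_clm_apply hD (differentiableAt_const _)]
    simp
  rw [hpd, hpd, (hu.isSymmSndFDerivAt (by simp)).eq]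

end PartialDerivatives

noncomputable def Fop {m : ℕ} {F : Type*} [NormedAddCommGroup F] [NormedSpace ℝ F]
    (Aco : Fin m → (Fin m → ℝ) → ℝ) (u : (Fin m → ℝ) → F) (x : Fin m → ℝ) : F :=
  ∑ i, Aco i x • pd i u x

lemma pd_Fop {m : ℕ} {F : Type*} [NormedAddCommGroup F] [NormedSpace ℝ F]
    {Aco : Fin m → (Fin m → ℝ) → ℝ} {u : (Fin m → ℝ) → F} {x : Fin m → ℝ}
    (hA : ∀ i, DifferentiableAt ℝ (Aco i) x)
    (hu : ∀ i, DifferentiableAt ℝ (pd i u) x) (k : Fin m) :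
    pd k (Fop Aco u) x = ∑ i, (Aco i x • pd k (pd i u) x + pd k (Aco i) x • pd i u x) := by
  unfold Fop
  rw [pd_sum _ (fun i _ => (hA i).fun_smul (hu i))]
  exact Finset.sum_congr rfl fun i _ => pd_smul (hA i) (hu i) k

noncomputable def commutatorCoeff {n : ℕ} {A : Type*} [NormedRing A] [NormedAlgebra ℝ A]
    (lam : Fin (n + 1) → (Fin (n + 1) → ℝ) → ℝ) (e : Fin (n + 1) → A)
    (Aco : Fin (n + 1) → (Fin (n + 1) → ℝ) → ℝ) (i : Fin (n + 1)) (x : Fin (n + 1) → ℝ) : A :=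
  DopR lam e (Aco i) x - (∑ j, Aco j x * pd j (lam i) x) • e i

section Commutator

variable {n : ℕ} {A : Type*} [NormedRing A] [NormedAlgebra ℝ A]
  {lam Aco : Fin (n + 1) → (Fin (n + 1) → ℝ) → ℝ} {e : Fin (n + 1) → A}
  {u : (Fin (n + 1) → ℝ) → A} {x : Fin (n + 1) → ℝ}

lemma pd_Dop (hlam : ∀ j, DifferentiableAt ℝ (lam j) x)
    (hu : ∀ j, DifferentiableAt ℝ (pd j u) x) (k : Fin (n + 1)) :
    pd k (Dop lam e u) x
      = ∑ j, (lam j x • (e j * pd k (pd j u) x) + pd k (lam j) x • (e j * pd j u x)) := by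
  have hterm : ∀ j, DifferentiableAt ℝ (fun y => e j * pd j u y) x :=
    fun j => (hu j).const_mul (e j)
  unfold Dop
  rw [pd_sum _ (fun j _ => (hlam j).fun_smul (hterm j))]
  refine Finset.sum_congr rfl fun j _ => ?_
  rw [pd_smul (hlam j) (hterm j), pd_const_mul (hu j)]

theorem Dop_Fop_eq_Fop_Dop_add (hlam : ∀ j, DifferentiableAt ℝ (lam j) x)
    (hA : ∀ i, DifferentiableAt ℝ (Aco i) x) (hu : ContDiffAt ℝ 2 u x) :
    Dop lam e (Fop Aco u) x
      = Fop Aco (Dop lam e u) x + ∑ i, commutatorCoeff lam e Aco i x * pd i u x := by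
  have hpu := differentiableAt_pd hu
  calc Dop lam e (Fop Aco u) x
      = ∑ i, ∑ k, ((lam k x * Aco i x) • (e k * pd k (pd i u) x)
          + (lam k x * pd k (Aco i) x) • (e k * pd i u x)) := by
        simp only [Dop, pd_Fop hA hpu, Finset.mul_sum, Finset.smul_sum, mul_add, smul_add,
          mul_smul_comm, smul_smul]
        exact Finset.sum_comm
    _ = ∑ i, ∑ k, ((Aco i x * lam k x) • (e k * pd i (pd k u) x)
          + (Aco i x * pd i (lam k) x) • (e k * pd k u x))
        + ∑ i, ∑ k, ((lam k x * pd k (Aco i) x) • (e k * pd i u x)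
          - (Aco i x * pd i (lam k) x) • (e k * pd k u x)) := by
        simp only [← Finset.sum_add_distrib, pd_pd_comm hu _ (_ : Fin (n + 1)), mul_comm (lam _ x)]
        refine Finset.sum_congr rfl fun i _ => Finset.sum_congr rfl fun k _ => ?_
        abel
    _ = Fop Aco (Dop lam e u) x + ∑ i, commutatorCoeff lam e Aco i x * pd i u x := by
        congr 1
        · simp only [Fop, pd_Dop hlam hpu, Finset.smul_sum, smul_add, smul_smul]
        · simp only [commutatorCoeff, DopR, Finset.sum_sub_distrib, sub_mul, Finset.sum_mul,
            Finset.sum_smul, smul_mul_assoc]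
          rw [Finset.sum_comm (f := fun i k => (Aco i x * pd i (lam k) x) • (e k * pd k u x))]

theorem commutatorCoeff_eq_of_cond {i : Fin (n + 1)} (he0 : e 0 = 1)
    (hlam : ∀ j, DifferentiableAt ℝ (lam j) x) (hlam0 : lam 0 x ≠ 0)
    (hcond : DopR lam e (Aco i) x
        - (lam i x / lam 0 x) • (DopR lam e (Aco 0) x * e i)
        - (∑ j, (Aco j x * lam 0 x * pd j (fun y => lam i y / lam 0 y) x) • e i) = 0) :
    commutatorCoeff lam e Aco i x
      = (lam i x / lam 0 x) • (commutatorCoeff lam e Aco 0 x * e i) := by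
  have hquot : ∑ j, Aco j x * lam 0 x * pd j (fun y => lam i y / lam 0 y) x
      = ∑ j, Aco j x * pd j (lam i) x - lam i x / lam 0 x * ∑ j, Aco j x * pd j (lam 0) x := by
    rw [Finset.mul_sum, ← Finset.sum_sub_distrib]
    refine Finset.sum_congr rfl fun j _ => ?_
    rw [mul_assoc, mul_pd_div (hlam i) (hlam 0) hlam0]
    ring
  rw [← Finset.sum_smul, hquot, sub_sub, sub_eq_zero] at hcond
  rw [commutatorCoeff, commutatorCoeff, hcond, he0, sub_mul, smul_mul_assoc, one_mul]
  module

end Commutator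

theorem associated_of_real_coeff_conditions_general {n : ℕ} {A : Type*}
    [NormedRing A] [NormedAlgebra ℝ A]
    (e : Fin (n + 1) → A) (he0 : e 0 = 1)
    (lam : Fin (n + 1) → (Fin (n + 1) → ℝ) → ℝ)
    (hlam : ∀ j, ContDiff ℝ 1 (lam j))
    (Ω : Set (Fin (n + 1) → ℝ)) (hΩ : IsOpen Ω)
    (hlam0 : ∀ x ∈ Ω, lam 0 x ≠ 0)
    (Aco : Fin (n + 1) → (Fin (n + 1) → ℝ) → ℝ)
    (hAco : ∀ i, ContDiff ℝ 1 (Aco i))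
    (hcond : ∀ i : Fin (n + 1), i ≠ 0 → ∀ x ∈ Ω,
      DopR lam e (Aco i) x
        - (lam i x / lam 0 x) • (DopR lam e (Aco 0) x * e i)
        - (∑ j, (Aco j x * lam 0 x * pd j (fun y => lam i y / lam 0 y) x) • e i) = 0) :
    ∀ u : (Fin (n + 1) → ℝ) → A, ContDiffOn ℝ 2 u Ω →
      (∀ x ∈ Ω, Dop lam e u x = 0) →
      ∀ x ∈ Ω, Dop lam e (fun y => ∑ i, Aco i y • pd i u y) x = 0 := by
  intro u hu hDu x hx
  have hlamd : ∀ j, DifferentiableAt ℝ (lam j) x := fun j => (hlam j).differentiable one_ne_zero x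
  have hAd : ∀ i, DifferentiableAt ℝ (Aco i) x := fun i => (hAco i).differentiable one_ne_zero x
  have hDu_nhds : Dop lam e u =ᶠ[nhds x] 0 :=
    Filter.eventually_of_mem (hΩ.mem_nhds hx) hDu
  have hM : ∀ i, commutatorCoeff lam e Aco i x
      = (lam i x / lam 0 x) • (commutatorCoeff lam e Aco 0 x * e i) := by
    intro i
    rcases eq_or_ne i 0 with rfl | hi
    · rw [he0, mul_one, div_self (hlam0 x hx), one_smul]
    · exact commutatorCoeff_eq_of_cond he0 hlamd (hlam0 x hx) (hcond i hi x hx)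
  calc Dop lam e (Fop Aco u) x
      = Fop Aco (Dop lam e u) x + ∑ i, commutatorCoeff lam e Aco i x * pd i u x :=
        Dop_Fop_eq_Fop_Dop_add hlamd hAd ((hu x hx).contDiffAt (hΩ.mem_nhds hx))
    _ = (lam 0 x)⁻¹ • (commutatorCoeff lam e Aco 0 x * Dop lam e u x) := by
        simp only [Fop, pd_eq_zero_of_eventuallyEq_zero hDu_nhds, smul_zero,
          Finset.sum_const_zero, zero_add, Dop, Finset.mul_sum, Finset.smul_sum]
        refine Finset.sum_congr rfl fun i _ => ?_
        rw [hM i, smul_mul_assoc, mul_smul_comm, smul_smul, div_eq_inv_mul, mul_assoc]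
    _ = 0 := by rw [hDu x hx, mul_zero, smul_zero]

/-- If the real-valued C¹ coefficients `A⁽ⁱ⁾` of `Fu = Σᵢ A⁽ⁱ⁾(x)∂ᵢu` satisfy
`DA⁽ⁱ⁾ - DA⁽⁰⁾ βᵢ eᵢ - Σⱼ A⁽ʲ⁾ λ₀ ∂ⱼβᵢ eᵢ = 0` on `Ω` for all `i = 1, …, n`,
then `(F, D)` is an associated pair: `Du = 0` implies `D(Fu) = 0`. -/
theorem associated_of_real_coeff_conditions {n : ℕ} {A : Type*}
    [NormedRing A] [NormedAlgebra ℝ A] [FiniteDimensional ℝ A]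
    (α : Fin (n + 1) → ℝ) (γ : Fin (n + 1) → Fin (n + 1) → ℝ)
    (e : Fin (n + 1) → A) (he0 : e 0 = 1)
    (hsq : ∀ j, j ≠ 0 → e j * e j = algebraMap ℝ A (-(α j)))
    (hanti : ∀ i j, i ≠ 0 → j ≠ 0 → i ≠ j →
      e i * e j + e j * e i = algebraMap ℝ A (2 * γ i j))
    (lam : Fin (n + 1) → (Fin (n + 1) → ℝ) → ℝ)
    (hlam : ∀ j, ContDiff ℝ 1 (lam j))
    (Ω : Set (Fin (n + 1) → ℝ)) (hΩ : IsOpen Ω)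
    (hlam0 : ∀ x ∈ Ω, lam 0 x ≠ 0)
    (Aco : Fin (n + 1) → (Fin (n + 1) → ℝ) → ℝ)
    (hAco : ∀ i, ContDiff ℝ 1 (Aco i))
    (hcond : ∀ i : Fin (n + 1), i ≠ 0 → ∀ x ∈ Ω,
      DopR lam e (Aco i) x
        - (lam i x / lam 0 x) • (DopR lam e (Aco 0) x * e i)
        - (∑ j, (Aco j x * lam 0 x * pd j (fun y => lam i y / lam 0 y) x) • e i) = 0) :
    ∀ u : (Fin (n + 1) → ℝ) → A, ContDiffOn ℝ 2 u Ω →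
      (∀ x ∈ Ω, Dop lam e u x = 0) →
      ∀ x ∈ Ω, Dop lam e (fun y => ∑ i, Aco i y • pd i u y) x = 0 :=
  associated_of_real_coeff_conditions_general e he0 lam hlam Ω hΩ hlam0 Aco hAco hcond
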